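/- arXiv:2210.09201 — 2 statements merged into one kernel-verified Lean document; each statement's English description precedes it below -/
import Mathlib

section
/- Fix μ > 0, σ² > 0, m > 0, δ ∈ [-1,1] \ {0}, set α(δ) = (1+δ)/2, and let f^∞(x) = C x^{μ/(σ²δ) − 2 + α(δ)} exp{ −(μ/(σ²δ²)) (x/m)^δ } for x > 0 (C > 0 any constant). Then f^∞ is a stationary solution of the Fokker–Planck equation ∂_t f = ∂_x[ (μ/(2δ)) x^{1−α(δ)} ((x/m)^δ − 1) f ] + (σ²/2) ∂²_x[ x^{2−α(δ)} f ]; more precisely, the flux vanishes identically: (μ/(2δ)) x^{1−α(δ)} ((x/m)^δ − 1) f^∞(x) + (σ²/2) d/dx ( x^{2−α(δ)} f^∞(x) ) = 0 for all x > 0. -/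
open Real Set

/-- The generalized Gamma profile
`f^∞(x) = C x^{μ/(σ²δ) − 2 + α(δ)} exp{−(μ/(σ²δ²))(x/m)^δ}`, with `α(δ) = (1+δ)/2`,
is a stationary solution of the contact Fokker–Planck equation: the flux
`(μ/(2δ)) x^{1−α(δ)} ((x/m)^δ − 1) f^∞(x) + (σ²/2) d/dx ( x^{2−α(δ)} f^∞(x) )`
vanishes identically on `(0,∞)`. -/
theorem generalized_gamma_is_stationary_flux_vanishes
    (μ σ2 m δ C : ℝ) (hμ : 0 < μ) (hσ2 : 0 < σ2) (hm : 0 < m)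
    (hδ : δ ∈ Icc (-1 : ℝ) 1 \ {0}) (hC : 0 < C)
    (α : ℝ) (hα : α = (1 + δ) / 2)
    (f : ℝ → ℝ)
    (hf : ∀ x : ℝ, 0 < x →
      f x = C * x ^ (μ / (σ2 * δ) - 2 + α) *
        Real.exp (-(μ / (σ2 * δ ^ 2)) * (x / m) ^ δ)) :
    ∀ x : ℝ, 0 < x →
      μ / (2 * δ) * x ^ (1 - α) * ((x / m) ^ δ - 1) * f x
        + σ2 / 2 * deriv (fun y : ℝ => y ^ (2 - α) * f y) x = 0 := by
  have hδ0 : δ ≠ 0 := hδ.2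
  intro x hx
  have hxm : (0 : ℝ) < x / m := div_pos hx hm
  set K := μ / (σ2 * δ ^ 2) with hK
  set q := μ / (σ2 * δ) with hq
  set p := μ / (σ2 * δ) - 2 + α with hp
  -- derivative of the smooth representative
  have hder : HasDerivAt (fun y : ℝ => C * y ^ q * Real.exp (-K * (y / m) ^ δ))
      (C * Real.exp (-K * (x / m) ^ δ) *
        (q * x ^ (q - 1) + x ^ q * (-K * (δ * (x / m) ^ (δ - 1) * (1 / m))))) x := by
    have h1 : HasDerivAt (fun y : ℝ => y ^ q) (q * x ^ (q - 1)) x :=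
      Real.hasDerivAt_rpow_const (Or.inl hx.ne')
    have h2 : HasDerivAt (fun y : ℝ => (y / m) ^ δ)
        (δ * (x / m) ^ (δ - 1) * (1 / m)) x := by
      have := (Real.hasDerivAt_rpow_const (p := δ) (Or.inl hxm.ne')).comp x
        ((hasDerivAt_id x).div_const m)
      simpa [Function.comp_def] using this
    have h3 : HasDerivAt (fun y : ℝ => Real.exp (-K * (y / m) ^ δ))
        (Real.exp (-K * (x / m) ^ δ) * (-K * (δ * (x / m) ^ (δ - 1) * (1 / m)))) x := by
      have := (Real.hasDerivAt_exp (-K * (x / m) ^ δ)).comp x (h2.const_mul (-K))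
      simpa [Function.comp_def, mul_comm, mul_assoc, mul_left_comm] using this
    have := (h1.const_mul C).mul h3
    convert this using 1
    · rfl
    · rfl
    · rfl
    · ring
  -- the two functions agree near x
  have heq : (fun y : ℝ => y ^ (2 - α) * f y)
      =ᶠ[nhds x] (fun y : ℝ => C * y ^ q * Real.exp (-K * (y / m) ^ δ)) := by
    filter_upwards [IsOpen.mem_nhds isOpen_Ioi hx] with y hy
    have hy' : (0 : ℝ) < y := hy
    rw [hf y hy']
    have : y ^ (2 - α) * y ^ p = y ^ q := by
      rw [← Real.rpow_add hy']
      congr 1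
      rw [hp]; ring
    calc y ^ (2 - α) * (C * y ^ p * Real.exp (-K * (y / m) ^ δ))
        = C * (y ^ (2 - α) * y ^ p) * Real.exp (-K * (y / m) ^ δ) := by ring
      _ = C * y ^ q * Real.exp (-K * (y / m) ^ δ) := by rw [this]
  have hderiv : deriv (fun y : ℝ => y ^ (2 - α) * f y) x
      = C * Real.exp (-K * (x / m) ^ δ) *
        (q * x ^ (q - 1) + x ^ q * (-K * (δ * (x / m) ^ (δ - 1) * (1 / m)))) := by
    rw [heq.deriv_eq, hder.deriv]
  rw [hderiv, hf x hx]
  -- rewrite rpow relations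
  have e1 : x ^ (1 - α) * x ^ p = x ^ (q - 1) := by
    rw [← Real.rpow_add hx]; congr 1; rw [hp]; ring
  have e2 : x ^ q * (x / m) ^ (δ - 1) * (1 / m) = x ^ (q - 1) * (x / m) ^ δ := by
    rw [Real.rpow_sub hxm, Real.rpow_one, Real.rpow_sub hx, Real.rpow_one]
    field_simp
  have e3 : K * δ = q := by
    rw [hK, hq]; field_simp
  have hσ0 : σ2 ≠ 0 := hσ2.ne'
  calc μ / (2 * δ) * x ^ (1 - α) * ((x / m) ^ δ - 1) *
        (C * x ^ p * Real.exp (-K * (x / m) ^ δ))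
      + σ2 / 2 * (C * Real.exp (-K * (x / m) ^ δ) *
        (q * x ^ (q - 1) + x ^ q * (-K * (δ * (x / m) ^ (δ - 1) * (1 / m)))))
      = C * Real.exp (-K * (x / m) ^ δ) *
        (μ / (2 * δ) * (x ^ (1 - α) * x ^ p) * ((x / m) ^ δ - 1)
          + σ2 / 2 * (q * x ^ (q - 1) - K * δ * (x ^ q * (x / m) ^ (δ - 1) * (1 / m)))) := by
        ring
    _ = C * Real.exp (-K * (x / m) ^ δ) *
        (μ / (2 * δ) * x ^ (q - 1) * ((x / m) ^ δ - 1)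
          + σ2 / 2 * (q * x ^ (q - 1) - q * (x ^ (q - 1) * (x / m) ^ δ))) := by
        rw [e1, e2, e3]
    _ = 0 := by
        have e4 : σ2 * q = μ / δ := by rw [hq]; field_simp
        linear_combination (-(C * Real.exp (-K * (x / m) ^ δ) * x ^ (q - 1) *
          ((x / m) ^ δ - 1)) / 2) * e4
end

section
/- Let f be a probability density on (0,∞) with mean m = ∫₀^∞ x f(x) dx and energy E = ∫₀^∞ x² f(x) dx (both finite), let μ, ν, τ, x_T > 0, α ∈ [0,1], and let Φ : (0,∞) → ℝ satisfy |Φ(s)| ≤ μ. Assume the zero-diffusion stationary energy balance ∫₀^∞ Φ(x/m) x^{2−α} f(x) dx = −(τ/ν) ∫₀^∞ x (x − x_T) f(x) dx (uniform control S ≡ 1, σ² = 0). Then |E − m·x_T| ≤ (μν/τ) ∫₀^∞ x^{2−α} f(x) dx; combined with |m − x_T| ≤ (μν/τ)∫₀^∞ x^{1−α} f dx this yields |E − m²| ≤ (μν/τ)( ∫₀^∞ x^{2−α} f dx + m ∫₀^∞ x^{1−α} f dx ), so that as ν → 0⁺ the energy converges to the square of the mean and the equilibrium concentrates at the target x_T.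 -/
open Real Set MeasureTheory

/-- Zero-diffusion energy balance for the uniform control (`S ≡ 1`):
if the contact density `f` with mean `m` and energy `E` satisfies
`∫ Φ(x/m) x^{2−α} f dx = −(τ/ν) ∫ x(x − x_T) f dx` with `|Φ| ≤ μ`, then
`|E − m·x_T| ≤ (μν/τ) ∫ x^{2−α} f dx`; combined with
`|m − x_T| ≤ (μν/τ) ∫ x^{1−α} f dx` this yields
`|E − m²| ≤ (μν/τ)(∫ x^{2−α} f dx + m ∫ x^{1−α} f dx)`, so that for vanishing
penalization the energy converges to the square of the mean and the equilibrium
concentrates at the target `x_T`. -/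
theorem zero_diffusion_energy_concentration
    (f : ℝ → ℝ) (m E μ ν τ xT α : ℝ)
    (hμ : 0 < μ) (hν : 0 < ν) (hτ : 0 < τ) (hxT : 0 < xT)
    (hα : α ∈ Icc (0 : ℝ) 1)
    (hf_nonneg : ∀ x ∈ Ioi (0 : ℝ), 0 ≤ f x)
    (hf_int : IntegrableOn f (Ioi 0))
    (hf_mass : ∫ x in Ioi (0 : ℝ), f x = 1)
    (hx_int : IntegrableOn (fun x => x * f x) (Ioi 0))
    (hmean : ∫ x in Ioi (0 : ℝ), x * f x = m)
    (hx2_int : IntegrableOn (fun x => x ^ 2 * f x) (Ioi 0))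
    (henergy : ∫ x in Ioi (0 : ℝ), x ^ 2 * f x = E)
    (hmom1_int : IntegrableOn (fun x => x ^ (1 - α) * f x) (Ioi 0))
    (hmom2_int : IntegrableOn (fun x => x ^ (2 - α) * f x) (Ioi 0))
    (Φ : ℝ → ℝ) (hΦ : ∀ s : ℝ, 0 < s → |Φ s| ≤ μ)
    (hΦ_int : IntegrableOn (fun x => Φ (x / m) * x ^ (2 - α) * f x) (Ioi 0))
    (hbalance : (∫ x in Ioi (0 : ℝ), Φ (x / m) * x ^ (2 - α) * f x)
      = -(τ / ν) * ∫ x in Ioi (0 : ℝ), x * (x - xT) * f x) :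
    (|E - m * xT| ≤ μ * ν / τ * ∫ x in Ioi (0 : ℝ), x ^ (2 - α) * f x) ∧
    (|m - xT| ≤ μ * ν / τ * (∫ x in Ioi (0 : ℝ), x ^ (1 - α) * f x) →
      |E - m ^ 2| ≤ μ * ν / τ *
        ((∫ x in Ioi (0 : ℝ), x ^ (2 - α) * f x)
          + m * ∫ x in Ioi (0 : ℝ), x ^ (1 - α) * f x)) := by

  -- positivity of the mean
  have hm0 : 0 ≤ m := by
    rw [← hmean]
    exact setIntegral_nonneg measurableSet_Ioi
      (fun x hx => mul_nonneg (le_of_lt hx) (hf_nonneg x hx))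
  have hm_pos : 0 < m := by
    rcases hm0.lt_or_eq with h | h
    · exact h
    · exfalso
      have hzero : ∫ x in Ioi (0 : ℝ), x * f x = 0 := by rw [hmean, ← h]
      have hnn : 0 ≤ᵐ[volume.restrict (Ioi (0:ℝ))] fun x => x * f x := by
        rw [Filter.EventuallyLE, ae_restrict_iff' measurableSet_Ioi]
        exact ae_of_all _ fun x hx => mul_nonneg (le_of_lt hx) (hf_nonneg x hx)
      have hae : (fun x => x * f x) =ᵐ[volume.restrict (Ioi (0:ℝ))] 0 :=
        (integral_eq_zero_iff_of_nonneg_ae hnn hx_int).mp hzero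
      have hfae : f =ᵐ[volume.restrict (Ioi (0:ℝ))] 0 := by
        have hx0 := (ae_restrict_iff' measurableSet_Ioi).mpr
          (ae_of_all volume (fun x (hx : x ∈ Ioi (0:ℝ)) => (show (0:ℝ) < x from hx).ne'))
        filter_upwards [hae, hx0] with x h1 h2
        have : x * f x = 0 := h1
        simpa [h2] using this
      have : ∫ x in Ioi (0:ℝ), f x = 0 := by
        rw [integral_congr_ae hfae]; simp
      rw [hf_mass] at this; norm_num at this
  set I2 := ∫ x in Ioi (0 : ℝ), x ^ (2 - α) * f x with hI2
  set I1 := ∫ x in Ioi (0 : ℝ), x ^ (1 - α) * f x with hI1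
  -- bound on the Φ-integral
  have hbound : |∫ x in Ioi (0:ℝ), Φ (x / m) * x ^ (2 - α) * f x| ≤ μ * I2 := by
    have habs : |∫ x in Ioi (0:ℝ), Φ (x / m) * x ^ (2 - α) * f x|
        ≤ ∫ x in Ioi (0:ℝ), |Φ (x / m) * x ^ (2 - α) * f x| := by
      simpa only [Real.norm_eq_abs] using
        norm_integral_le_integral_norm (μ := volume.restrict (Ioi (0:ℝ)))
          (f := fun x => Φ (x / m) * x ^ (2 - α) * f x)
    have hmono : ∫ x in Ioi (0:ℝ), |Φ (x / m) * x ^ (2 - α) * f x|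
        ≤ ∫ x in Ioi (0:ℝ), μ * (x ^ (2 - α) * f x) := by
      refine integral_mono_ae hΦ_int.abs (hmom2_int.const_mul μ) ?_
      rw [Filter.EventuallyLE, ae_restrict_iff' measurableSet_Ioi]
      refine ae_of_all _ fun x hx => ?_
      have hx' : (0:ℝ) < x := hx
      have hnn2 : 0 ≤ x ^ (2 - α) * f x :=
        mul_nonneg (Real.rpow_nonneg hx'.le _) (hf_nonneg x hx)
      have heq : |Φ (x / m) * x ^ (2 - α) * f x| = |Φ (x / m)| * (x ^ (2 - α) * f x) := by
        rw [abs_mul, abs_mul, abs_of_nonneg (Real.rpow_nonneg hx'.le _),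
          abs_of_nonneg (hf_nonneg x hx), mul_assoc]
      rw [heq]
      exact mul_le_mul_of_nonneg_right (hΦ _ (div_pos hx' hm_pos)) hnn2
    calc |∫ x in Ioi (0:ℝ), Φ (x / m) * x ^ (2 - α) * f x|
        ≤ ∫ x in Ioi (0:ℝ), μ * (x ^ (2 - α) * f x) := habs.trans hmono
      _ = μ * I2 := by rw [integral_const_mul]
  -- the quadratic moment identity
  have hquad : ∫ x in Ioi (0:ℝ), x * (x - xT) * f x = E - m * xT := by
    have heq : ∀ x : ℝ, x * (x - xT) * f x = x ^ 2 * f x - xT * (x * f x) := by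
      intro x; ring
    simp_rw [heq]
    rw [integral_sub hx2_int (hx_int.const_mul xT), integral_const_mul, hmean, henergy]
    ring
  have hE : E - m * xT = -(ν / τ) * ∫ x in Ioi (0:ℝ), Φ (x / m) * x ^ (2 - α) * f x := by
    rw [hbalance, hquad]
    field_simp
  have key : |E - m * xT| ≤ μ * ν / τ * I2 := by
    rw [hE, abs_mul, abs_neg, abs_of_nonneg (div_nonneg hν.le hτ.le)]
    calc ν / τ * |∫ x in Ioi (0:ℝ), Φ (x / m) * x ^ (2 - α) * f x|
        ≤ ν / τ * (μ * I2) :=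
          mul_le_mul_of_nonneg_left hbound (div_nonneg hν.le hτ.le)
      _ = μ * ν / τ * I2 := by ring
  refine ⟨key, fun h1 => ?_⟩
  have htri : |E - m ^ 2| ≤ |E - m * xT| + m * |m - xT| := by
    have hrw : E - m ^ 2 = (E - m * xT) + m * (xT - m) := by ring
    calc |E - m ^ 2| = |(E - m * xT) + m * (xT - m)| := by rw [hrw]
      _ ≤ |E - m * xT| + |m * (xT - m)| := abs_add_le _ _
      _ = |E - m * xT| + m * |m - xT| := by
          rw [abs_mul, abs_of_nonneg hm_pos.le, abs_sub_comm xT m]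
  have hm1 : m * |m - xT| ≤ m * (μ * ν / τ * I1) :=
    mul_le_mul_of_nonneg_left h1 hm_pos.le
  calc |E - m ^ 2| ≤ |E - m * xT| + m * |m - xT| := htri
    _ ≤ μ * ν / τ * I2 + m * (μ * ν / τ * I1) := add_le_add key hm1
    _ = μ * ν / τ * (I2 + m * I1) := by ring
end
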